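/- arXiv:1401.6247 — 2 statements merged into one kernel-verified Lean document; each statement's English description precedes it below -/
import Mathlib

section
/- Let (A_n)_{n∈ℕ} be a sequence of categories and p_n : A_{n+1} → A_n isofibrations such that each A_n has a terminal object and each p_n preserves terminal objects. Then there exists a family (t_n)_{n∈ℕ} with t_n a terminal object of A_n and p_n t_{n+1} = t_n (equality of objects) for all n. -/
open CategoryTheory Limits

/-!
Any two terminal objects are uniquely isomorphic, so a terminal `x` of `A n` is isomorphic to
the image of a terminal object of `A (n+1)`; lifting that isomorphism along the isofibration
gives a terminal object lying over `x` on the nose. Starting from any terminal object of `A 0`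
and lifting step by step yields the compatible family.
-/

/-- A functor `p : E ⥤ B` is an isofibration if every isomorphism `b ≅ p e` in `B` lifts to
an isomorphism in `E` with codomain `e`. -/
def Isofibration {E B : Type*} [Category E] [Category B] (p : E ⥤ B) : Prop :=
  ∀ (e : E) (b : B) (φ : b ≅ p.obj e),
    ∃ (e' : E) (hb : p.obj e' = b) (ψ : e' ≅ e), p.map ψ.hom = eqToHom hb ≫ φ.hom

theorem exists_seq_of_forall_exists_lift {X : ℕ → Type*} (f : ∀ n, X (n + 1) → X n)
    (P : ∀ n, X n → Prop) {x₀ : X 0} (h₀ : P 0 x₀)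
    (hlift : ∀ n x, P n x → ∃ y, P (n + 1) y ∧ f n y = x) :
    ∃ t : ∀ n, X n, (∀ n, P n (t n)) ∧ ∀ n, f n (t (n + 1)) = t n := by
  choose g hgP hgf using hlift
  let s : ∀ n, { x : X n // P n x } := fun n =>
    Nat.rec ⟨x₀, h₀⟩ (fun n x => ⟨g n x.1 x.2, hgP n x.1 x.2⟩) n
  exact ⟨fun n => (s n).1, fun n => (s n).2, fun n => hgf n (s n).1 (s n).2⟩

theorem Isofibration.exists_isTerminal_obj_eq {E B : Type*} [Category E] [Category B]
    {p : E ⥤ B} (hp : Isofibration p) {e : E} (he : IsTerminal e)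
    (hpe : IsTerminal (p.obj e)) {x : B} (hx : IsTerminal x) :
    ∃ y : E, Nonempty (IsTerminal y) ∧ p.obj y = x := by
  obtain ⟨y, hy, ψ, -⟩ := hp e x (hx.uniqueUpToIso hpe)
  exact ⟨y, ⟨he.ofIso ψ.symm⟩, hy⟩

/-- Given a countable tower of isofibrations `p n : A (n+1) ⥤ A n` between
categories with terminal objects, each `p n` preserving them, there is a compatible family of
terminal objects `t n` with `(p n) (t (n+1)) = t n` on the nose. -/
theorem stmt_8 (A : ℕ → Type*) [∀ n, Category (A n)]
    (p : ∀ n, A (n + 1) ⥤ A n) (hiso : ∀ n, Isofibration (p n))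
    [∀ n, HasTerminal (A n)]
    (hpres : ∀ n (x : A (n + 1)), IsTerminal x → Nonempty (IsTerminal ((p n).obj x))) :
    ∃ t : ∀ n, A n,
      (∀ n, Nonempty (IsTerminal (t n))) ∧ (∀ n, (p n).obj (t (n + 1)) = t n) := by
  refine exists_seq_of_forall_exists_lift (fun n => (p n).obj)
    (fun n x => Nonempty (IsTerminal x)) ⟨terminalIsTerminal (C := A 0)⟩ ?_
  rintro n x ⟨hx⟩
  obtain ⟨hpT⟩ := hpres n _ terminalIsTerminal
  exact (hiso n).exists_isTerminal_obj_eq terminalIsTerminal hpT hx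
end

section
/- Let f : B → A, g : C → A, ℓ : C → B and λ : ℓ ⋙ f ⟶ g be such that for each object c of C the pair (ℓ c, λ_c) is a terminal object of the comma category f ↓ (g c). Then (ℓ, λ) is an absolute right lifting of g through f: for every category X, every pair of functors b : X → B, c : X → C, and every natural transformation χ : b ⋙ f ⟶ c ⋙ g, there exists a unique natural transformation ζ : b ⟶ c ⋙ ℓ such that χ = (whiskering λ by c) ∘ (whiskering ζ by f), i.e. χ_x = λ_{c x} ∘ f(ζ_x) for all x in X. -/
open CategoryTheory Limits

/-!
Terminality of `(ℓ c, λ_c)` in `f ↓ g c` says that every arrow `f b' ⟶ g c` factors uniquely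
as `f.map ψ ≫ λ_c` with `ψ : b' ⟶ ℓ c`. Factoring each component `χ_x` this way gives `ζ_x`;
both sides of a naturality square of `ζ` factor the same arrow `χ_x ≫ g (c u)` through `λ`, so
they agree, and uniqueness of `ζ` is again uniqueness of the componentwise factorizations.
-/

section PointwiseUniversal

variable {B A C X : Type*} [Category B] [Category A] [Category C] [Category X]
  {f : B ⥤ A} {g : C ⥤ A} {l : C ⥤ B} {lam : l ⋙ f ⟶ g}
  (h : ∀ y : C, (CostructuredArrow.mk (lam.app y) : CostructuredArrow f (g.obj y)).IsUniversal)
  {b : X ⥤ B} {c : X ⥤ C}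

theorem map_lift_mk_comp_of_isUniversal {Y : B} {y : C} (φ : f.obj Y ⟶ g.obj y) :
    f.map ((h y).lift (CostructuredArrow.mk φ)) ≫ lam.app y = φ :=
  (h y).fac (CostructuredArrow.mk φ)

def liftOfIsUniversal (χ : b ⋙ f ⟶ c ⋙ g) : b ⟶ c ⋙ l where
  app x := (h (c.obj x)).lift (CostructuredArrow.mk (Y := b.obj x) (χ.app x))
  naturality x y u := (h (c.obj y)).hom_ext <| by
    have hn := lam.naturality (c.map u)
    dsimp at hn ⊢
    simp only [Functor.map_comp, Category.assoc, map_lift_mk_comp_of_isUniversal, hn]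
    rw [← Category.assoc, map_lift_mk_comp_of_isUniversal]
    exact χ.naturality u

theorem whiskerRight_liftOfIsUniversal_comp (χ : b ⋙ f ⟶ c ⋙ g) :
    Functor.whiskerRight (liftOfIsUniversal h χ) f ≫ Functor.whiskerLeft c lam = χ := by
  ext x
  exact map_lift_mk_comp_of_isUniversal h (χ.app x)

include h in
theorem natTrans_ext_of_isUniversal {ζ ζ' : b ⟶ c ⋙ l}
    (w : Functor.whiskerRight ζ f ≫ Functor.whiskerLeft c lam =
      Functor.whiskerRight ζ' f ≫ Functor.whiskerLeft c lam) : ζ = ζ' := by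
  ext x
  exact (h (c.obj x)).hom_ext (congrArg (NatTrans.app · x) w)

end PointwiseUniversal

/-- If `λ : ℓ ⋙ f ⟶ g` is such that each `(ℓ c, λ_c)` is terminal in the comma
category `f ↓ (g c)`, then `(ℓ, λ)` is an absolute right lifting of `g` through `f`: every
`χ : b ⋙ f ⟶ c ⋙ g` factors uniquely as `χ = (c ◫ λ) ∘ (ζ ◫ f)`. -/
theorem stmt_10 {B A C : Type*} [Category B] [Category A] [Category C]
    (f : B ⥤ A) (g : C ⥤ A) (l : C ⥤ B) (lam : l ⋙ f ⟶ g)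
    (h : ∀ c : C,
      IsTerminal (CostructuredArrow.mk (lam.app c) : CostructuredArrow f (g.obj c))) :
    ∀ {X : Type*} [Category X] (b : X ⥤ B) (c : X ⥤ C) (χ : b ⋙ f ⟶ c ⋙ g),
      ∃! ζ : b ⟶ c ⋙ l,
        χ = CategoryTheory.Functor.whiskerRight ζ f ≫ CategoryTheory.Functor.whiskerLeft c lam := by
  intro X _ b c χ
  refine ⟨liftOfIsUniversal h χ, (whiskerRight_liftOfIsUniversal_comp h χ).symm, fun ζ hζ => ?_⟩
  apply natTrans_ext_of_isUniversal h
  rw [← hζ, whiskerRight_liftOfIsUniversal_comp]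
end
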